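/- (Well posedness of b(f) for Sobolev functions.) Let 1 ≤ p < ∞ with conjugate exponent q, let f ∈ W^{1,p}(X,d,m), and let L_f and L̃_f be two linear maps each satisfying the defining conditions of W^{1,p} for f. Then for every b ∈ Der^q_q one has L_f(b) = L̃_f(b) m-almost everywhere; this common value is denoted b(f). -/

import Mathlib

open MeasureTheory Metric Filter Set
open scoped ENNReal NNReal Topology

noncomputable section

namespace DiMarino

/-- Real Lipschitz functions on `X` with bounded support. -/
def Lip0 (X : Type*) [MetricSpace X] : Set (X → ℝ) :=
  {f | (∃ K, LipschitzWith K f) ∧ Bornology.IsBounded (tsupport f)}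

/-- Bounded real Lipschitz functions on `X`. -/
def LipB (X : Type*) [MetricSpace X] : Set (X → ℝ) :=
  {f | (∃ K, LipschitzWith K f) ∧ ∃ M, ∀ x, |f x| ≤ M}

variable {X : Type*} [MetricSpace X]

/-- The Lipschitz constant of `f` on the set `s`, as an element of `ℝ≥0∞`. -/
def lipOn (f : X → ℝ) (s : Set X) : ℝ≥0∞ :=
  ⨆ x ∈ s, ⨆ y ∈ s, edist (f x) (f y) / edist x y

/-- The asymptotic Lipschitz constant `lip_a f (x) = lim_{r→0⁺} Lip (f, B_r(x))`
(the limit is an infimum by monotonicity). -/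
def lipA (f : X → ℝ) (x : X) : ℝ :=
  (⨅ (r : ℝ) (_ : 0 < r), lipOn f (ball x r)).toReal

/-- The asymptotic Lipschitz constant of the restriction `f|_C` at `x`. -/
def lipAOn (f : X → ℝ) (C : Set X) (x : X) : ℝ :=
  (⨅ (r : ℝ) (_ : 0 < r), lipOn f (C ∩ ball x r)).toReal

variable [MeasurableSpace X]

/-- A metric derivation: a linear map from `Lip_0(X,d)` to `L^0(X,m)` satisfying the
Leibniz rule and weak locality `|b(f)| ≤ g · lip_a f`. -/
structure MDerivation (X : Type*) [MetricSpace X] [MeasurableSpace X]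
    (m : Measure X) where
  toFun : (X → ℝ) → X → ℝ
  aemeasurable' : ∀ f ∈ Lip0 X, AEMeasurable (toFun f) m
  map_add' : ∀ f ∈ Lip0 X, ∀ g ∈ Lip0 X, toFun (f + g) =ᵐ[m] toFun f + toFun g
  map_smul' : ∀ (c : ℝ), ∀ f ∈ Lip0 X, toFun (c • f) =ᵐ[m] c • toFun f
  leibniz' : ∀ f ∈ Lip0 X, ∀ g ∈ Lip0 X,
    toFun (f * g) =ᵐ[m] toFun f * g + f * toFun g
  locality' : ∃ g : X → ℝ, AEMeasurable g m ∧ (∀ᵐ x ∂m, 0 ≤ g x) ∧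
    ∀ f ∈ Lip0 X, ∀ᵐ x ∂m, |toFun f x| ≤ g x * lipA f x

/-- `g` is a locality function for the derivation `b`, i.e. `|b(f)| ≤ g · lip_a f`
`m`-a.e. for every `f ∈ Lip_0(X,d)`. -/
def IsLocality (m : Measure X) (b : MDerivation X m) (g : X → ℝ) : Prop :=
  AEMeasurable g m ∧ (∀ᵐ x ∂m, 0 ≤ g x) ∧
    ∀ f ∈ Lip0 X, ∀ᵐ x ∂m, |b.toFun f x| ≤ g x * lipA f x

/-- `g` is the (`m`-a.e.) minimal locality function of `b`; it is denoted `|b|`. -/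
def IsMinimalLocality (m : Measure X) (b : MDerivation X m) (g : X → ℝ) : Prop :=
  IsLocality m b g ∧ ∀ g', IsLocality m b g' → ∀ᵐ x ∂m, g x ≤ g' x

/-- `h` is the divergence of the derivation `b`:
`-∫ b(f) dm = ∫ h f dm` for every `f ∈ Lip_0(X,d)`. -/
def IsDivergence (m : Measure X) (b : MDerivation X m) (h : X → ℝ) : Prop :=
  AEMeasurable h m ∧ ∀ f ∈ Lip0 X, Integrable (b.toFun f) m ∧
    Integrable (fun x => h x * f x) m ∧
    (-∫ x, b.toFun f x ∂m) = ∫ x, h x * f x ∂m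

/-- `Der^{p₁}_{p₂}(X,d,m)`: derivations with `|b| ∈ L^{p₁}` and `div b ∈ L^{p₂}`. -/
def DerSet (m : Measure X) (p₁ p₂ : ℝ≥0∞) : Set (MDerivation X m) :=
  {b | (∃ g, IsLocality m b g ∧ MemLp g p₁ m) ∧ ∃ h, MemLp h p₂ m ∧ IsDivergence m b h}

/-- `Der_b`: derivations with `|b| ∈ L^∞`. -/
def DerB (m : Measure X) : Set (MDerivation X m) :=
  {b | ∃ g, IsLocality m b g ∧ MemLp g ∞ m}

/-- `L^1_loc` in a metric measure space: integrable on bounded sets. -/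
def LocInt (m : Measure X) (g : X → ℝ) : Prop :=
  AEMeasurable g m ∧ ∀ s : Set X, Bornology.IsBounded s → IntegrableOn g s m

/-- `D(div)`: derivations with `|b|` and `div b` in `L^1_loc(X,m)`. -/
def DDiv (m : Measure X) : Set (MDerivation X m) :=
  {b | (∃ g, IsLocality m b g ∧ LocInt m g) ∧ ∃ h, LocInt m h ∧ IsDivergence m b h}

/-- `bu` represents the value `b(u)` of the canonical extension of the derivation `b`
to locally Lipschitz functions: on the interior of any set where a cutoff `χ ∈ Lip_0`
equals `1`, `b(u)` agrees with `b(χ·u)`. -/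
def IsExtension (m : Measure X) (b : MDerivation X m) (u : X → ℝ) (bu : X → ℝ) : Prop :=
  AEMeasurable bu m ∧
    ∀ χ ∈ Lip0 X, ∀ᵐ x ∂m, x ∈ interior {y | χ y = 1} → bu x = b.toFun (χ * u) x

/-- `C` is an admissible continuity constant for `L_f` with respect to the `Der^q` norm. -/
def ContBound (m : Measure X) (q : ℝ≥0∞) (Lf : MDerivation X m → X → ℝ) (C : ℝ) : Prop :=
  ∀ b ∈ DerSet m q q, ∀ g, IsLocality m b g →
    ∫ x, |Lf b x| ∂m ≤ C * (eLpNorm g q m).toReal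

/-- `L_f` realizes `f` as a Sobolev function: a linear, `Der^q`-norm continuous,
`Lip_b`-linear map `L_f : Der^q_q → L^1(X,m)` with
`∫ L_f(b) dm = -∫ f · div b dm`; for `p = 1` it moreover extends `L^∞`-linearly
to `L^∞ · Der_L`. -/
structure IsSobolevRep (m : Measure X) (p q : ℝ≥0∞) (f : X → ℝ)
    (Lf : MDerivation X m → X → ℝ) : Prop where
  integrable : ∀ b ∈ DerSet m q q, Integrable (Lf b) m
  ibp : ∀ b ∈ DerSet m q q, ∀ d, IsDivergence m b d →
    ∫ x, Lf b x ∂m = -∫ x, f x * d x ∂m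
  map_add : ∀ b₁ ∈ DerSet m q q, ∀ b₂ ∈ DerSet m q q, ∀ b₃ ∈ DerSet m q q,
    (∀ g ∈ Lip0 X, b₃.toFun g =ᵐ[m] b₁.toFun g + b₂.toFun g) →
    Lf b₃ =ᵐ[m] Lf b₁ + Lf b₂
  map_smul : ∀ (c : ℝ), ∀ b₁ ∈ DerSet m q q, ∀ b₂ ∈ DerSet m q q,
    (∀ g ∈ Lip0 X, b₂.toFun g =ᵐ[m] c • b₁.toFun g) → Lf b₂ =ᵐ[m] c • Lf b₁
  bounded : ∃ C : ℝ, 0 ≤ C ∧ ContBound m q Lf C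
  lipb_linear : ∀ h ∈ LipB X, ∀ b ∈ DerSet m q q, ∀ b' ∈ DerSet m q q,
    (∀ g ∈ Lip0 X, b'.toFun g =ᵐ[m] fun x => h x * b.toFun g x) →
    Lf b' =ᵐ[m] fun x => h x * Lf b x
  extend_one : p = 1 → ∃ Lf' : MDerivation X m → X → ℝ,
    (∀ b ∈ DerSet m ∞ ∞, Lf' b =ᵐ[m] Lf b) ∧
    ∀ u : X → ℝ, MemLp u ∞ m → ∀ b ∈ DerSet m ∞ ∞, ∀ b' : MDerivation X m,
      (∀ g ∈ Lip0 X, b'.toFun g =ᵐ[m] fun x => u x * b.toFun g x) →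
      Lf' b' =ᵐ[m] fun x => u x * Lf' b x

/-- `f ∈ W^{1,p}(X,d,m)` (definition via derivations). -/
def MemW1p (m : Measure X) (p q : ℝ≥0∞) (f : X → ℝ) : Prop :=
  MemLp f p m ∧ ∃ Lf, IsSobolevRep m p q f Lf

/-- `gf` dominates `L_f`: `|b(f)| ≤ gf · |b|` `m`-a.e. for every `b ∈ Der^q_q`. -/
def IsGradientBound (m : Measure X) (q : ℝ≥0∞) (Lf : MDerivation X m → X → ℝ)
    (gf : X → ℝ) : Prop :=
  ∀ b ∈ DerSet m q q, ∀ gb, IsMinimalLocality m b gb →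
    ∀ᵐ x ∂m, |Lf b x| ≤ gf x * gb x

/-- `gf` is the `p`-weak gradient `|∇f|_p` : the `m`-a.e. least nonnegative `L^p`
function with `|b(f)| ≤ gf · |b|` for all `b ∈ Der^q_q`. -/
def IsMinimalPGradient (m : Measure X) (p q : ℝ≥0∞) (Lf : MDerivation X m → X → ℝ)
    (gf : X → ℝ) : Prop :=
  MemLp gf p m ∧ (∀ᵐ x ∂m, 0 ≤ gf x) ∧ IsGradientBound m q Lf gf ∧
    ∀ gf', MemLp gf' p m → (∀ᵐ x ∂m, 0 ≤ gf' x) → IsGradientBound m q Lf gf' →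
      ∀ᵐ x ∂m, gf x ≤ gf' x

/-- `g` is a relaxed gradient of `f`: some `f_n ∈ Lip_0` converge to `f` in `L^p` with
`lip_a f_n → g` in `L^p`. -/
def IsRelaxedGradient (m : Measure X) (p : ℝ≥0∞) (f g : X → ℝ) : Prop :=
  MemLp g p m ∧ ∃ fn : ℕ → X → ℝ, (∀ n, fn n ∈ Lip0 X) ∧
    Tendsto (fun n => eLpNorm (fn n - f) p m) atTop (𝓝 0) ∧
    Tendsto (fun n => eLpNorm (fun x => lipA (fn n) x - g x) p m) atTop (𝓝 0)

/-- `f ∈ W^{1,p}_*(X,d,m)` (relaxed Sobolev space). -/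
def MemW1pStar (m : Measure X) (p : ℝ≥0∞) (f : X → ℝ) : Prop :=
  MemLp f p m ∧ ∃ g, IsRelaxedGradient m p f g

/-- `g = |∇f|_{p,*}`: a relaxed gradient of minimal `L^p` norm. -/
def IsMinimalRelaxedGradient (m : Measure X) (p : ℝ≥0∞) (f g : X → ℝ) : Prop :=
  IsRelaxedGradient m p f g ∧
    ∀ g', IsRelaxedGradient m p f g' → eLpNorm g p m ≤ eLpNorm g' p m

end DiMarino

/-- The curve space `C([0,1],X)` is endowed with the Borel σ-algebra of the sup metric. -/
instance {X : Type*} [MetricSpace X] : MeasurableSpace C(unitInterval, X) := borel _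
instance {X : Type*} [MetricSpace X] : BorelSpace C(unitInterval, X) := ⟨rfl⟩

namespace DiMarino

variable {X : Type*} [MetricSpace X]

/-- The canonical extension of a curve `γ : [0,1] → X` to `ℝ`, constant outside `[0,1]`. -/
def extC (γ : C(unitInterval, X)) : ℝ → X :=
  fun t => γ (Set.projIcc 0 1 zero_le_one t)

/-- `γ` has metric speed `v` at time `t`. -/
def HasMetricSpeedAt (γ : ℝ → X) (t v : ℝ) : Prop :=
  Tendsto (fun h : ℝ => dist (γ (t + h)) (γ t) / |h|) (𝓝[≠] 0) (𝓝 v)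

variable [MeasurableSpace X]

/-- `π` is a `q`-test plan with compression constant `Cpi`, and `spd γ t` is
the metric speed `|γ̇_t|`: `π` is a probability measure concentrated on `AC^q`
curves, with `q`-energy `‖ ‖γ̇‖_{L^q(0,1)} ‖_{L^q(π)}` finite and
`(e_t)_♯ π ≤ Cpi · m` for all `t ∈ [0,1]`. -/
structure IsTestPlan (m : Measure X) (q : ℝ≥0∞) (π : Measure C(unitInterval, X))
    (spd : C(unitInterval, X) → ℝ → ℝ) (Cpi : ℝ≥0∞) : Prop where
  prob : IsProbabilityMeasure π
  cfin : Cpi ≠ ∞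
  spd_meas : AEMeasurable (fun p : C(unitInterval, X) × ℝ => spd p.1 p.2)
    (π.prod (volume.restrict (Set.Ioo (0:ℝ) 1)))
  spd_nonneg : ∀ᵐ γ ∂π, ∀ᵐ t ∂(volume.restrict (Set.Ioo (0:ℝ) 1)), 0 ≤ spd γ t
  speed : ∀ᵐ γ ∂π, ∀ᵐ t ∂(volume.restrict (Set.Ioo (0:ℝ) 1)),
    HasMetricSpeedAt (extC γ) t (spd γ t)
  ac : ∀ᵐ γ ∂π, (∀ s t : ℝ, 0 ≤ s → s ≤ t → t ≤ 1 →
    IntegrableOn (spd γ) (Set.Ioc s t) volume ∧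
    dist (extC γ s) (extC γ t) ≤ ∫ u in Set.Ioc s t, spd γ u)
  energy : eLpNorm
    (fun γ => (eLpNorm (spd γ) q (volume.restrict (Set.Ioo (0:ℝ) 1))).toReal) q π < ∞
  compression : ∀ t : unitInterval, Measure.map (fun γ => γ t) π ≤ Cpi • m

/-- `g` is a `p`-weak upper gradient of `f`:
`|f(γ₁) - f(γ₀)| ≤ ∫_γ g ds < ∞` for `p`-a.e. curve, i.e. π-a.e. for all `q`-test plans. -/
def IsWeakUpperGradient (m : Measure X) (q : ℝ≥0∞) (f g : X → ℝ) : Prop :=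
  ∀ (π : Measure C(unitInterval, X)) (spd : C(unitInterval, X) → ℝ → ℝ) (Cpi : ℝ≥0∞),
    IsTestPlan m q π spd Cpi →
    ∀ᵐ γ ∂π, IntegrableOn (fun t => g (extC γ t) * spd γ t) (Set.Ioo (0:ℝ) 1) volume ∧
      |f (extC γ 1) - f (extC γ 0)| ≤ ∫ t in Set.Ioo (0:ℝ) 1, g (extC γ t) * spd γ t

/-- `f ∈ W^{1,p}_w(X,d,m)` (Sobolev space via weak upper gradients). -/
def MemW1pw (m : Measure X) (p q : ℝ≥0∞) (f : X → ℝ) : Prop :=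
  MemLp f p m ∧ ∃ g, MemLp g p m ∧ (∀ᵐ x ∂m, 0 ≤ g x) ∧ IsWeakUpperGradient m q f g

/-- `g = |∇f|_{p,w}`: the `m`-a.e. minimal `p`-weak upper gradient of `f`. -/
def IsMinimalWeakUpperGradient (m : Measure X) (p q : ℝ≥0∞) (f g : X → ℝ) : Prop :=
  MemLp g p m ∧ (∀ᵐ x ∂m, 0 ≤ g x) ∧ IsWeakUpperGradient m q f g ∧
    ∀ g', MemLp g' p m → (∀ᵐ x ∂m, 0 ≤ g' x) → IsWeakUpperGradient m q f g' →
      ∀ᵐ x ∂m, g x ≤ g' x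

/-- The upper semicontinuous envelope (relative to `m`-a.e. domination by bounded
continuous functions) of `g`. -/
def uscEnvAE (m : Measure X) (g : X → ℝ) (x : X) : ℝ :=
  sInf {y : ℝ | ∃ h : X → ℝ, Continuous h ∧ (∃ M, ∀ z, |h z| ≤ M) ∧
    (∀ᵐ z ∂m, g z ≤ h z) ∧ y = h x}

/-- `ν' = h · ν` for a signed measure `ν` and a function `h`. -/
def IsDensitySM (ν' ν : SignedMeasure X) (h : X → ℝ) : Prop :=
  ∀ A : Set X, MeasurableSet A →
    ν' A = (∫ x in A, h x ∂ν.toJordanDecomposition.posPart)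
      - ∫ x in A, h x ∂ν.toJordanDecomposition.negPart

/-- `L_f` realizes `f` as a `BV` function: a linear map `L_f : Der_b → M(X)`,
continuous for the `Der^∞` norm, `C_b(X)`-linear, with
`L_f(b)(X) = -∫ f · div b dm` for all `b ∈ Der_L`. -/
structure IsBVRep (m : Measure X) (f : X → ℝ)
    (Lf : MDerivation X m → SignedMeasure X) : Prop where
  ibp : ∀ b ∈ DerSet m ∞ ∞, ∀ d, IsDivergence m b d →
    Lf b Set.univ = -∫ x, f x * d x ∂m
  map_add : ∀ b₁ ∈ DerB m, ∀ b₂ ∈ DerB m, ∀ b₃ ∈ DerB m,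
    (∀ g ∈ Lip0 X, b₃.toFun g =ᵐ[m] b₁.toFun g + b₂.toFun g) → Lf b₃ = Lf b₁ + Lf b₂
  map_smul : ∀ (c : ℝ), ∀ b₁ ∈ DerB m, ∀ b₂ ∈ DerB m,
    (∀ g ∈ Lip0 X, b₂.toFun g =ᵐ[m] c • b₁.toFun g) → Lf b₂ = c • Lf b₁
  bounded : ∃ C : ℝ, 0 ≤ C ∧ ∀ b ∈ DerB m, ∀ g, IsLocality m b g →
    ((Lf b).totalVariation Set.univ).toReal ≤ C * (eLpNorm g ∞ m).toReal
  cb_linear : ∀ h : X → ℝ, Continuous h → (∃ M, ∀ x, |h x| ≤ M) →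
    ∀ b ∈ DerB m, ∀ b' ∈ DerB m,
      (∀ g ∈ Lip0 X, b'.toFun g =ᵐ[m] fun x => h x * b.toFun g x) →
      IsDensitySM (Lf b') (Lf b) h

/-- `f ∈ BV(X,d,m)` (definition via derivations). -/
def MemBV (m : Measure X) (f : X → ℝ) : Prop :=
  MemLp f 1 m ∧ ∃ Lf, IsBVRep m f Lf

/-- `ν` is a finite measure dominating `L_f`:
`Df(b)(A) ≤ ∫_A |b|^* dν` for every Borel `A` and `b ∈ Der_L`. -/
def IsTVBound (m : Measure X) (Lf : MDerivation X m → SignedMeasure X)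
    (ν : Measure X) : Prop :=
  IsFiniteMeasure ν ∧ ∀ A : Set X, MeasurableSet A → ∀ b ∈ DerSet m ∞ ∞,
    ∀ gb, IsMinimalLocality m b gb → Lf b A ≤ ∫ x in A, uscEnvAE m gb x ∂ν

/-- `ν = |Df|`: the least finite measure dominating `L_f`. -/
def IsTotalVariation (m : Measure X) (Lf : MDerivation X m → SignedMeasure X)
    (ν : Measure X) : Prop :=
  IsTVBound m Lf ν ∧ ∀ ν', IsTVBound m Lf ν' → ν ≤ ν'

/-- `ν` is a weak-* limit, in duality with `C_b(X)`, of measures `lip_a(f_n) m` with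
`f_n ∈ Lip_0` converging to `f` in `L^1`. -/
def IsStarLimit (m : Measure X) (f : X → ℝ) (ν : Measure X) : Prop :=
  IsFiniteMeasure ν ∧ ∃ fn : ℕ → X → ℝ, (∀ n, fn n ∈ Lip0 X) ∧
    Tendsto (fun n => eLpNorm (fn n - f) 1 m) atTop (𝓝 0) ∧
    ∀ h : X → ℝ, Continuous h → (∃ M, ∀ x, |h x| ≤ M) →
      Tendsto (fun n => ∫ x, h x * lipA (fn n) x ∂m) atTop (𝓝 (∫ x, h x ∂ν))

/-- `f ∈ BV_*(X,d,m)` (relaxed BV space). -/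
def MemBVStar (m : Measure X) (f : X → ℝ) : Prop :=
  MemLp f 1 m ∧ ∃ ν, IsStarLimit m f ν

/-- `ν = |Df|_*`: the minimal relaxed total variation measure. -/
def IsMinimalStarLimit (m : Measure X) (f : X → ℝ) (ν : Measure X) : Prop :=
  IsStarLimit m f ν ∧ ∀ ν', IsStarLimit m f ν' → ν ≤ ν'

/-- The essential total variation of `f` along the curve `γ`. -/
def essVarAlong (f : X → ℝ) (γ : C(unitInterval, X)) : ℝ≥0∞ :=
  ⨅ (g : ℝ → ℝ) (_ : ∀ᵐ t ∂(volume.restrict (Set.Icc (0:ℝ) 1)), g t = f (extC γ t)),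
    eVariationOn g (Set.Icc (0:ℝ) 1)

/-- `μ` is an admissible weak total variation measure for `f` in the sense of
Ambrosio–Di Marino: along every `∞`-test plan, `f` has finite essential variation on
a.e. curve and the (localized) integrated variation is bounded by
`C(π) ‖Lip γ‖_{L^∞(π)} μ`. -/
def IsWBVMeasure (m : Measure X) (f : X → ℝ) (μ : Measure X) : Prop :=
  IsFiniteMeasure μ ∧
  ∀ (π : Measure C(unitInterval, X)) (spd : C(unitInterval, X) → ℝ → ℝ) (Cpi : ℝ≥0∞),
    IsTestPlan m ∞ π spd Cpi →
    (∀ᵐ γ ∂π, essVarAlong f γ < ∞) ∧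
    ∀ A : Set X, IsOpen A →
      ∫⁻ γ in {γ | ∀ t : unitInterval, γ t ∈ A}, essVarAlong f γ ∂π ≤
        Cpi * eLpNorm
          (fun γ => (eLpNorm (spd γ) ∞ (volume.restrict (Set.Ioo (0:ℝ) 1))).toReal) ∞ π
          * μ A

/-- `f ∈ w-BV(X,d,m)`. -/
def MemWBV (m : Measure X) (f : X → ℝ) : Prop :=
  MemLp f 1 m ∧ ∃ μ, IsWBVMeasure m f μ

/-- `μ = |Df|_w`: the minimal weak total variation measure. -/
def IsMinimalWBVMeasure (m : Measure X) (f : X → ℝ) (μ : Measure X) : Prop :=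
  IsWBVMeasure m f μ ∧ ∀ μ', IsWBVMeasure m f μ' → μ ≤ μ'


/-!
For `h ∈ Lip_0` the derivation `h · b` is again in `Der^q_q`, with divergence
`h · div b + b(h)` by the Leibniz rule. Lip_b-linearity together with the integration by parts
identity then gives `∫ h L_f(b) dm = -∫ f div (h · b) dm` for every representative `L_f`, so
`∫ h (L_f(b) - L̃_f(b)) dm = 0` for all `h ∈ Lip_0`. Products of thickened indicators are
`Lip_0` functions converging boundedly to the indicator of any closed set, hence the integrable
function `L_f(b) - L̃_f(b)` has zero integral on closed sets and vanishes a.e.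
-/

section Lipschitz

variable {X : Type*} [MetricSpace X]

theorem lipA_le_of_lipschitzWith {K : ℝ≥0} {f : X → ℝ} (hf : LipschitzWith K f) (x : X) :
    lipA f x ≤ K := by
  have hball : lipOn f (ball x 1) ≤ K :=
    iSup₂_le fun y _ => iSup₂_le fun z _ => ENNReal.div_le_of_le_mul (hf y z)
  exact ENNReal.toReal_le_of_le_ofReal K.coe_nonneg
    ((biInf_le _ one_pos).trans (by simpa using hball))

theorem lip0_subset_lipB : Lip0 X ⊆ LipB X := by
  rintro f ⟨⟨K, hK⟩, hsupp⟩
  obtain ⟨C, hC⟩ := (hK.isBounded_image hsupp).exists_norm_le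
  refine ⟨⟨K, hK⟩, max C 0, fun x => ?_⟩
  by_cases hx : x ∈ tsupport f
  · exact (hC _ (mem_image_of_mem f hx)).trans (le_max_left _ _)
  · simp [image_eq_zero_of_notMem_tsupport hx]

theorem mul_mem_lipB {f g : X → ℝ} (hf : f ∈ LipB X) (hg : g ∈ LipB X) : f * g ∈ LipB X := by
  obtain ⟨⟨Kf, hKf⟩, Mf, hMf⟩ := hf
  obtain ⟨⟨Kg, hKg⟩, Mg, hMg⟩ := hg
  refine ⟨⟨_, LipschitzWith.of_dist_le' (K := Mf * Kg + Mg * Kf) fun x y => ?_⟩,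
    Mf * Mg, fun x => ?_⟩
  · have hsplit : f x * g x - f y * g y = f x * (g x - g y) + g y * (f x - f y) := by ring
    have hMf0 : 0 ≤ Mf := (abs_nonneg _).trans (hMf x)
    have hMg0 : 0 ≤ Mg := (abs_nonneg _).trans (hMg x)
    calc dist (f x * g x) (f y * g y)
        ≤ |f x| * |g x - g y| + |g y| * |f x - f y| := by
          rw [Real.dist_eq, hsplit, ← abs_mul, ← abs_mul]; exact abs_add_le _ _
      _ ≤ Mf * (Kg * dist x y) + Mg * (Kf * dist x y) := by
          rw [← Real.dist_eq, ← Real.dist_eq]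
          gcongr
          exacts [hMf x, hKg.dist_le_mul x y, hMg y, hKf.dist_le_mul x y]
      _ = (Mf * Kg + Mg * Kf) * dist x y := by ring
  · rw [Pi.mul_apply, abs_mul]
    exact mul_le_mul (hMf x) (hMg x) (abs_nonneg _) ((abs_nonneg _).trans (hMf x))

theorem mul_mem_lip0 {f g : X → ℝ} (hf : f ∈ LipB X) (hg : g ∈ Lip0 X) : f * g ∈ Lip0 X :=
  ⟨(mul_mem_lipB hf (lip0_subset_lipB hg)).1, hg.2.subset tsupport_mul_subset_right⟩

theorem continuous_of_mem_lipB {f : X → ℝ} (hf : f ∈ LipB X) : Continuous f :=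
  hf.1.elim fun _ hK => hK.continuous

theorem thickenedIndicator_mem_lipB {δ : ℝ} (hδ : 0 < δ) (E : Set X) :
    (fun x => (thickenedIndicator hδ E x : ℝ)) ∈ LipB X :=
  ⟨⟨_, isometry_subtype_coe.lipschitz.comp (lipschitzWith_thickenedIndicator hδ E)⟩, 1,
    fun x => by simpa using thickenedIndicator_le_one hδ E x⟩

theorem thickenedIndicator_mem_lip0 {δ : ℝ} (hδ : 0 < δ) {E : Set X}
    (hE : Bornology.IsBounded E) : (fun x => (thickenedIndicator hδ E x : ℝ)) ∈ Lip0 X := by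
  refine ⟨(thickenedIndicator_mem_lipB hδ E).1, (hE.thickening (δ := δ)).closure.subset
    (closure_mono fun x hx => ?_)⟩
  by_contra hout
  exact hx (by simp [thickenedIndicator_zero hδ E hout])

theorem exists_lip0_tendsto_indicator [Nonempty X] {s : Set X} (hs : IsClosed s) :
    ∃ φ : ℕ → X → ℝ, (∀ n, φ n ∈ Lip0 X) ∧ (∀ n x, |φ n x| ≤ 1) ∧
      ∀ x, Tendsto (fun n => φ n x) atTop (𝓝 (s.indicator 1 x)) := by
  obtain ⟨x₀⟩ := ‹Nonempty X›
  have hδ : ∀ n : ℕ, (0 : ℝ) < 1 / (n + 1) := fun n => Nat.one_div_pos_of_nat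
  -- the second factor bounds the support and tends to `1` pointwise
  refine ⟨fun n x => (thickenedIndicator (hδ n) s x : ℝ) *
      (thickenedIndicator one_pos (closedBall x₀ n) x : ℝ),
    fun n => mul_mem_lip0 (thickenedIndicator_mem_lipB _ _)
      (thickenedIndicator_mem_lip0 _ isBounded_closedBall),
    fun n x => ?_, fun x => ?_⟩
  · simp only [abs_mul, NNReal.abs_eq]
    exact mul_le_one₀ (mod_cast thickenedIndicator_le_one _ _ x) (by positivity)
      (mod_cast thickenedIndicator_le_one _ _ x)
  · have hthick : Tendsto (fun n => (thickenedIndicator (hδ n) s x : ℝ)) atTop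
        (𝓝 (s.indicator 1 x)) := by
      have := (NNReal.continuous_coe.tendsto _).comp <| tendsto_pi_nhds.1
        (thickenedIndicator_tendsto_indicator_closure hδ tendsto_one_div_add_atTop_nhds_zero_nat
          s) x
      by_cases hx : x ∈ s <;> simpa [Function.comp_def, hs.closure_eq, hx] using this
    have hball : ∀ᶠ n : ℕ in atTop,
        (thickenedIndicator one_pos (closedBall x₀ n) x : ℝ) = 1 := by
      filter_upwards [eventually_ge_atTop ⌈dist x x₀⌉₊] with n hn
      simp [thickenedIndicator_one one_pos _ (mem_closedBall.2 (Nat.ceil_le.1 hn))]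
    simpa using hthick.mul (tendsto_const_nhds.congr' (EventuallyEq.symm hball))

end Lipschitz

section Measure

variable {X : Type*} [MetricSpace X] [MeasurableSpace X] [BorelSpace X] {m : Measure X}

theorem integrable_lipB_mul {h u : X → ℝ} (hh : h ∈ LipB X) (hu : Integrable u m) :
    Integrable (fun x => h x * u x) m :=
  let ⟨_, _, hM⟩ := hh
  hu.bdd_mul (continuous_of_mem_lipB hh).aestronglyMeasurable (ae_of_all _ hM)

theorem ae_eq_zero_of_forall_integral_lip0_mul_eq_zero {u : X → ℝ} (hu : Integrable u m)
    (h : ∀ φ ∈ Lip0 X, ∫ x, φ x * u x ∂m = 0) : u =ᵐ[m] 0 := by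
  rcases isEmpty_or_nonempty X with _ | _
  · exact ae_of_all _ isEmptyElim
  refine ae_eq_zero_of_forall_setIntegral_isClosed_eq_zero hu fun s hs => ?_
  obtain ⟨φ, hφ, hφ1, hlim⟩ := exists_lip0_tendsto_indicator hs
  have hdom := tendsto_integral_of_dominated_convergence (fun x => |u x|)
    (fun n => (continuous_of_mem_lipB (lip0_subset_lipB (hφ n))).aestronglyMeasurable.mul
      hu.aestronglyMeasurable) hu.abs
    (fun n => ae_of_all _ fun x => by
      simpa [abs_mul] using mul_le_mul_of_nonneg_right (hφ1 n x) (abs_nonneg (u x)))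
    (ae_of_all _ fun x => by
      simpa [← indicator_mul_left] using (hlim x).mul_const (u x))
  rw [← integral_indicator hs.measurableSet]
  exact tendsto_nhds_unique hdom (tendsto_const_nhds.congr fun n => (h _ (hφ n)).symm)

end Measure

section Derivation

variable {X : Type*} [MetricSpace X] [MeasurableSpace X] {m : Measure X}

-- `IsLocality m (b.mulLeft h _) (C * g)` unfolded, as `MDerivation.mulLeft` needs it
theorem IsLocality.mulLeft {b : MDerivation X m} {g h : X → ℝ} {C : ℝ} (hg : IsLocality m b g)
    (hC : ∀ x, |h x| ≤ C) :
    AEMeasurable (fun x => C * g x) m ∧ (∀ᵐ x ∂m, 0 ≤ C * g x) ∧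
      ∀ f ∈ Lip0 X, ∀ᵐ x ∂m, |h x * b.toFun f x| ≤ C * g x * lipA f x := by
  obtain ⟨hgm, hg0, hloc⟩ := hg
  refine ⟨hgm.const_mul C, ?_, fun f hf => ?_⟩
  · filter_upwards [hg0] with x hx
    exact mul_nonneg ((abs_nonneg _).trans (hC x)) hx
  · filter_upwards [hloc f hf] with x hx
    rw [abs_mul, mul_assoc]
    exact mul_le_mul (hC x) hx (abs_nonneg _) ((abs_nonneg _).trans (hC x))

variable [BorelSpace X]

def MDerivation.mulLeft (b : MDerivation X m) (h : X → ℝ) (hh : h ∈ LipB X) :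
    MDerivation X m where
  toFun u x := h x * b.toFun u x
  aemeasurable' f hf := (continuous_of_mem_lipB hh).aemeasurable.mul (b.aemeasurable' f hf)
  map_add' f hf g hg := by
    filter_upwards [b.map_add' f hf g hg] with x hx
    simp only [Pi.add_apply, hx, mul_add]
  map_smul' c f hf := by
    filter_upwards [b.map_smul' c f hf] with x hx
    simp only [Pi.smul_apply, hx, smul_eq_mul, mul_left_comm]
  leibniz' f hf g hg := by
    filter_upwards [b.leibniz' f hf g hg] with x hx
    simp only [Pi.add_apply, Pi.mul_apply] at hx ⊢
    rw [hx]; ring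
  locality' :=
    let ⟨_, _, hC⟩ := hh
    let ⟨_, hg⟩ := b.locality'
    ⟨_, IsLocality.mulLeft hg hC⟩

theorem IsDivergence.mulLeft {b : MDerivation X m} {d h : X → ℝ} (hd : IsDivergence m b d)
    (hh : h ∈ Lip0 X) :
    IsDivergence m (b.mulLeft h (lip0_subset_lipB hh))
      fun x => h x * d x + b.toFun h x := by
  have hhB := lip0_subset_lipB hh
  refine ⟨((continuous_of_mem_lipB hhB).aemeasurable.mul hd.1).add (b.aemeasurable' h hh),
    fun f hf => ?_⟩
  have hfB := lip0_subset_lipB hf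
  have hhf : h * f ∈ Lip0 X := mul_mem_lip0 hhB hf
  obtain ⟨hbf, -, -⟩ := hd.2 f hf
  obtain ⟨hbh, -, -⟩ := hd.2 h hh
  obtain ⟨hbhf, hdhf, hibp⟩ := hd.2 (h * f) hhf
  have hbh_f : Integrable (fun x => b.toFun h x * f x) m := by
    simpa only [mul_comm] using integrable_lipB_mul hfB hbh
  have hleibniz : (fun x => h x * b.toFun f x) =ᵐ[m]
      fun x => b.toFun (h * f) x - b.toFun h x * f x := by
    filter_upwards [b.leibniz' h hh f hf] with x hx
    simp only [hx, Pi.add_apply, Pi.mul_apply]; ring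
  have hsplit : (fun x => (h x * d x + b.toFun h x) * f x) =
      fun x => d x * (h * f) x + b.toFun h x * f x := by
    ext x; simp only [Pi.mul_apply]; ring
  refine ⟨integrable_lipB_mul hhB hbf, hsplit ▸ hdhf.add hbh_f, ?_⟩
  change -∫ x, h x * b.toFun f x ∂m = _
  rw [integral_congr_ae hleibniz, integral_sub hbhf hbh_f, hsplit, integral_add hdhf hbh_f,
    ← hibp]
  ring

theorem mulLeft_mem_derSet {q : ℝ≥0∞} {b : MDerivation X m} {h : X → ℝ} (hh : h ∈ Lip0 X)
    (hb : b ∈ DerSet m q q) : b.mulLeft h (lip0_subset_lipB hh) ∈ DerSet m q q := by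
  obtain ⟨⟨g, hg, hgq⟩, d, hdq, hd⟩ := hb
  obtain ⟨⟨K, hK⟩, C, hC⟩ := lip0_subset_lipB hh
  have hbh : MemLp (b.toFun h) q m := by
    refine hgq.of_le_mul (c := K) (b.aemeasurable' h hh).aestronglyMeasurable ?_
    filter_upwards [hg.2.2 h hh, hg.2.1] with x hx hx0
    rw [Real.norm_eq_abs, Real.norm_eq_abs, abs_of_nonneg hx0, mul_comm]
    exact hx.trans (mul_le_mul_of_nonneg_left (lipA_le_of_lipschitzWith hK x) hx0)
  have hhd : MemLp (fun x => h x * d x) q m := by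
    refine hdq.of_le_mul (c := C) (hK.continuous.aestronglyMeasurable.mul
      hdq.aestronglyMeasurable) (ae_of_all _ fun x => ?_)
    rw [norm_mul, Real.norm_eq_abs]
    exact mul_le_mul_of_nonneg_right (hC x) (norm_nonneg _)
  exact ⟨⟨_, IsLocality.mulLeft hg hC, hgq.const_mul C⟩, _, hhd.add hbh, hd.mulLeft hh⟩

theorem IsSobolevRep.integral_mul_eq {p q : ℝ≥0∞} {f : X → ℝ} {Lf : MDerivation X m → X → ℝ}
    (hL : IsSobolevRep m p q f Lf) {b : MDerivation X m} (hb : b ∈ DerSet m q q) {h d : X → ℝ}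
    (hh : h ∈ Lip0 X) (hd : IsDivergence m (b.mulLeft h (lip0_subset_lipB hh)) d) :
    ∫ x, h x * Lf b x ∂m = -∫ x, f x * d x ∂m := by
  have hhb := mulLeft_mem_derSet hh hb
  rw [← hL.ibp _ hhb d hd]
  exact integral_congr_ae
    (hL.lipb_linear h (lip0_subset_lipB hh) b hb _ hhb fun _ _ => EventuallyEq.rfl).symm

end Derivation

theorem statement4_general {X : Type*} [MetricSpace X] [MeasurableSpace X] [BorelSpace X]
    (m : MeasureTheory.Measure X)
    (p q : ℝ≥0∞)
    (f : X → ℝ)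
    (Lf Lf' : MDerivation X m → X → ℝ)
    (h1 : IsSobolevRep m p q f Lf) (h2 : IsSobolevRep m p q f Lf') :
    ∀ b ∈ DerSet m q q, Lf b =ᵐ[m] Lf' b := by
  intro b hb
  have hint : Integrable (Lf b - Lf' b) m := (h1.integrable b hb).sub (h2.integrable b hb)
  refine (ae_eq_zero_of_forall_integral_lip0_mul_eq_zero hint fun h hh => ?_).mono
    fun x hx => sub_eq_zero.1 hx
  obtain ⟨d, -, hd⟩ := (mulLeft_mem_derSet hh hb).2
  have hhB := lip0_subset_lipB hh
  simp only [Pi.sub_apply, mul_sub]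
  rw [integral_sub (integrable_lipB_mul hhB (h1.integrable b hb))
    (integrable_lipB_mul hhB (h2.integrable b hb)), h1.integral_mul_eq hb hh hd,
    h2.integral_mul_eq hb hh hd, sub_self]

/-- (Well posedness of `b(f)` for Sobolev functions.) If `L_f` and
`L̃_f` both satisfy the defining conditions of `W^{1,p}` for `f`, then
`L_f(b) = L̃_f(b)` `m`-a.e. for every `b ∈ Der^q_q`. -/
theorem statement4 {X : Type*} [MetricSpace X] [MeasurableSpace X] [BorelSpace X]
    [TopologicalSpace.SeparableSpace X] [CompleteSpace X]
    (m : MeasureTheory.Measure X)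
    (hm : ∀ s : Set X, Bornology.IsBounded s → m s < ∞)
    (p q : ℝ≥0∞) (hp1 : 1 ≤ p) (hpt : p ≠ ∞) (hpq : 1 / p + 1 / q = 1)
    (f : X → ℝ) (hf : MemLp f p m)
    (Lf Lf' : MDerivation X m → X → ℝ)
    (h1 : IsSobolevRep m p q f Lf) (h2 : IsSobolevRep m p q f Lf') :
    ∀ b ∈ DerSet m q q, Lf b =ᵐ[m] Lf' b :=
  statement4_general m p q f Lf Lf' h1 h2

end DiMarino
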